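/- (Doubling of dependency sets.) Let A = (L_1,...,L_m) be an affine constraint on ℓ variables with L_1(x_1,...,x_ℓ) = x_1, and let A' be the system of 2m affine forms {L_j(x_1,x_2,...,x_ℓ) : j ∈ [m]} ∪ {L_j(x_1,y_2,...,y_ℓ) : j ∈ [m]} in variables x_1,...,x_ℓ,y_2,...,y_ℓ. Let Λ and Λ' be the (d,k)-dependency sets of A and A' respectively. Then |Λ'| = |Λ|² · p^{k+1}. -/

import Mathlib

open scoped BigOperators

noncomputable section

/-- The circle group `𝕋 = ℝ/ℤ`. -/
abbrev 𝕋 : Type := AddCircle (1 : ℝ)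

/-- The character `e(x) = e^{2πix}` on `𝕋`, valued in `ℂ`. -/
def ee (x : 𝕋) : ℂ := (AddCircle.toCircle x : ℂ)

/-- The average `E_{x ∈ α}[f(x)]` of a complex-valued function on a finite type. -/
def cavg {α : Type*} [Fintype α] (f : α → ℂ) : ℂ := (∑ x, f x) / (Fintype.card α : ℂ)

/-- The average of a real-valued function on a finite type. -/
def ravg {α : Type*} [Fintype α] (f : α → ℝ) : ℝ := (∑ x, f x) / (Fintype.card α : ℝ)

/-- Multiplicative derivative `Δ_h f (x) = f(x+h) conj (f x)`. -/
def mDeriv {G : Type*} [Add G] (h : G) (f : G → ℂ) : G → ℂ :=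
  fun x => f (x + h) * (starRingEnd ℂ) (f x)

/-- `E_{h_1,…,h_d,x}[(Δ_{h_1} ⋯ Δ_{h_d} f)(x)]`. -/
def gowersAvg {G : Type*} [AddCommGroup G] [Fintype G] : ℕ → (G → ℂ) → ℂ
  | 0, f => cavg f
  | d + 1, f => cavg fun h => gowersAvg d (mDeriv h f)

/-- The Gowers norm `‖f‖_{U^d} = |E_{h_1,…,h_d,x}[(Δ_{h_1} ⋯ Δ_{h_d} f)(x)]|^{1/2^d}`. -/
def gowersNorm {G : Type*} [AddCommGroup G] [Fintype G] (d : ℕ) (f : G → ℂ) : ℝ :=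
  (‖gowersAvg d f‖) ^ ((1 : ℝ) / 2 ^ d)

/-- Additive derivative `D_h P (x) = P(x+h) - P(x)`. -/
def aDeriv {G M : Type*} [Add G] [Sub M] (h : G) (P : G → M) : G → M :=
  fun x => P (x + h) - P x

/-- Iterated additive derivative `D_{h_1} ⋯ D_{h_k} P`. -/
def iterADeriv {G M : Type*} [AddCommGroup G] [AddCommGroup M] :
    {k : ℕ} → (Fin k → G) → (G → M) → (G → M)
  | 0, _, P => P
  | _ + 1, h, P => aDeriv (h 0) (iterADeriv (Fin.tail h) P)

/-- `P` is a (non-classical) polynomial of degree ≤ `d`: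
all `(d+1)`-fold additive derivatives vanish identically. -/
def IsPolyDeg {G M : Type*} [AddCommGroup G] [AddCommGroup M] (d : ℕ) (P : G → M) : Prop :=
  ∀ (h : Fin (d + 1) → G) (x : G), iterADeriv h P x = 0

/-- `P` has degree exactly `d`. -/
def ExactDeg {G M : Type*} [AddCommGroup G] [AddCommGroup M] (d : ℕ) (P : G → M) : Prop :=
  IsPolyDeg d P ∧ ∀ d' < d, ¬ IsPolyDeg d' P

/-- The degree of a polynomial: the least `d` with `IsPolyDeg d P`. -/
def polyDeg {G M : Type*} [AddCommGroup G] [AddCommGroup M] (P : G → M) : ℕ :=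
  sInf {d | IsPolyDeg d P}

/-- `P` has `d`-rank at most `r`: `P = Γ(Q_1,…,Q_r)` with the `Q_i` of degree ≤ `d-1`. -/
def HasRankLE {G : Type*} [AddCommGroup G] (d : ℕ) (P : G → 𝕋) (r : ℕ) : Prop :=
  ∃ (Q : Fin r → G → 𝕋) (Γ : (Fin r → 𝕋) → 𝕋),
    (∀ i, IsPolyDeg (d - 1) (Q i)) ∧ ∀ x, P x = Γ fun i => Q i x

/-- The `d`-rank of `P`, in `ℕ∞` (`⊤` if no finite decomposition exists;
for `d = 1` this is `⊤` exactly when `P` is non-constant). -/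
def rankd {G : Type*} [AddCommGroup G] (d : ℕ) (P : G → 𝕋) : ℕ∞ :=
  sInf {r : ℕ∞ | ∃ m : ℕ, r = m ∧ HasRankLE d P m}

/-- `P` has depth exactly `k` (shift zero): values in `U_{k+1} = (1/p^{k+1})ℤ/ℤ` but not all
in `U_k`. -/
def ExactDepth {G : Type*} (p k : ℕ) (P : G → 𝕋) : Prop :=
  (∀ x, (p ^ (k + 1)) • P x = 0) ∧ ¬ (∀ x, (p ^ k) • P x = 0)

/-- Application of a linear form `L = (w_t)_t` to a tuple of points of `F_p^n`:
`(x_t)_t ↦ ∑_t w_t x_t`. -/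
def formApply {p : ℕ} {ι : Type*} [Fintype ι] {n : ℕ} (L : ι → ZMod p)
    (x : ι → Fin n → ZMod p) : Fin n → ZMod p := ∑ t, L t • x t

/-- The `(d,k)`-dependency set of a system of forms `L`: the tuples
`(λ_j) ∈ [0, p^{k+1}-1]^m` with `∑_j λ_j P(L_j(x)) ≡ 0` for every non-classical polynomial `P`
of degree `d` and depth `k` (over every `F_p^n`). -/
def DepSet (p k d : ℕ) {ι μ : Type*} [Fintype ι] [Fintype μ]
    (L : μ → ι → ZMod p) : Set (μ → ℕ) :=
  {lam | (∀ j, lam j < p ^ (k + 1)) ∧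
    ∀ (n : ℕ) (P : (Fin n → ZMod p) → 𝕋), ExactDeg d P → ExactDepth p k P →
      ∀ x : ι → Fin n → ZMod p, (∑ j, lam j • P (formApply (L j) x)) = 0}

/-- `b_1,…,b_m ∈ 𝕋^κ` are consistent with the forms `L` with respect to degree data `dd`
and depth data `kk`. -/
def ConsistentWith (p : ℕ) {ι κ : Type*} [Fintype ι] [Fintype κ] {m : ℕ}
    (L : Fin m → ι → ZMod p) (dd kk : κ → ℕ) (b : Fin m → κ → 𝕋) : Prop :=
  ∀ i : κ, (∀ j, (p ^ (kk i + 1)) • b j i = 0) ∧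
    ∀ lam ∈ DepSet p (kk i) (dd i) L, (∑ j, lam j • b j i) = 0

/-- The polynomial factor defined by `P_1,…,P_C` with depths `k_1,…,k_C` has rank greater
than `r`: every integer combination `∑ λ_i P_i`, with the `λ_i` not all divisible by the
respective `p^{k_i+1}`, has `D`-rank > `r` where `D = max_i deg(λ_i P_i)`. -/
def FactorRankGT (p : ℕ) {G : Type*} [AddCommGroup G] {C : ℕ}
    (P : Fin C → G → 𝕋) (k : Fin C → ℕ) (r : ℕ) : Prop :=
  ∀ lam : Fin C → ℤ, (∃ i, ¬ ((p : ℤ) ^ (k i + 1) ∣ lam i)) →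
    (r : ℕ∞) < rankd (Finset.univ.sup fun i => polyDeg fun x => lam i • P i x)
      (fun x => ∑ i, lam i • P i x)

/-- Cauchy–Schwarz complexity ≤ `d`: for each `i`, the remaining forms can be partitioned into
`d+1` classes, with `L_i` outside the linear span of each class. -/
def CSComplexityLE (p : ℕ) {m : ℕ} {ι : Type*} [Fintype ι] (d : ℕ)
    (L : Fin m → ι → ZMod p) : Prop :=
  ∀ i, ∃ c : Fin m → Fin (d + 1), ∀ t,
    L i ∉ Submodule.span (ZMod p) {v | ∃ j, j ≠ i ∧ c j = t ∧ v = L j}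

/-!
Coefficients only matter modulo `N = p^(k+1)`, so we count dependencies with coefficients in
`ZMod N`. The polynomial `x ↦ 1/N + (x_1 ⋯ x_d - 1)/p` has degree `d`, depth `k` and takes a
value of order `N`; evaluating at `(x_1, 0, …, 0)`, where every form equals `x_1`, shows that the
coefficients of every dependency sum to `0`. Specialising `y = 0`, resp. `x_2 = ⋯ = x_ℓ = 0`, and
using `L_1 = x_1`, a pair `(a, b)` is a dependency of the doubled system iff `Σ a + Σ b = 0` and
`a - (Σ a) e_1`, `b - (Σ b) e_1` are dependencies of the original one. Hence
`(a, b) ↦ (a - (Σ a) e_1, b - (Σ b) e_1, Σ a)` is a bijection `Λ' ≃ Λ × Λ × ZMod N`.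
-/

open Finset

section IterADeriv

variable {G M : Type*} [AddCommGroup G] [AddCommGroup M]

@[simp]
theorem iterADeriv_zero (h : Fin 0 → G) (f : G → M) : iterADeriv h f = f := rfl

theorem iterADeriv_succ {s : ℕ} (h : Fin (s + 1) → G) (f : G → M) :
    iterADeriv h f = aDeriv (h 0) (iterADeriv (Fin.tail h) f) := rfl

theorem aDeriv_comm (a b : G) (f : G → M) : aDeriv a (aDeriv b f) = aDeriv b (aDeriv a f) := by
  funext x
  simp only [aDeriv, add_right_comm x a b]
  abel

theorem iterADeriv_aDeriv : ∀ {s : ℕ} (h : Fin s → G) (c : G) (f : G → M),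
    iterADeriv h (aDeriv c f) = aDeriv c (iterADeriv h f)
  | 0, _, _, _ => rfl
  | _ + 1, h, c, f => by rw [iterADeriv_succ, iterADeriv_succ, iterADeriv_aDeriv, aDeriv_comm]

theorem iterADeriv_succ' {s : ℕ} (h : Fin (s + 1) → G) (f : G → M) :
    iterADeriv h f = iterADeriv (Fin.tail h) (aDeriv (h 0) f) :=
  (iterADeriv_aDeriv _ _ _).symm

theorem iterADeriv_add : ∀ {s : ℕ} (h : Fin s → G) (f g : G → M),
    iterADeriv h (f + g) = iterADeriv h f + iterADeriv h g
  | 0, _, _, _ => rfl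
  | _ + 1, h, f, g => by
    rw [iterADeriv_succ, iterADeriv_add]
    funext x
    simp only [aDeriv, iterADeriv_succ, Pi.add_apply]
    abel

theorem iterADeriv_zero_fun : ∀ {s : ℕ} (h : Fin s → G), iterADeriv h (0 : G → M) = 0
  | 0, _ => rfl
  | _ + 1, h => by
    rw [iterADeriv_succ, iterADeriv_zero_fun]
    funext x
    exact sub_self 0

theorem iterADeriv_comp_addMonoidHom {M' : Type*} [AddCommGroup M'] (φ : M →+ M') :
    ∀ {s : ℕ} (h : Fin s → G) (f : G → M), iterADeriv h (φ ∘ f) = φ ∘ iterADeriv h f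
  | 0, _, _ => rfl
  | _ + 1, h, f => by
    rw [iterADeriv_succ, iterADeriv_comp_addMonoidHom, iterADeriv_succ]
    funext x
    simp [aDeriv]

theorem isPolyDeg_iff_of_aDeriv_eq {f g : G → M} (hfg : ∀ c, aDeriv c f = aDeriv c g) (s : ℕ) :
    IsPolyDeg s f ↔ IsPolyDeg s g := by
  simp only [IsPolyDeg, iterADeriv_succ', hfg]

theorem isPolyDeg_succ_iff {s : ℕ} {f : G → M} :
    IsPolyDeg (s + 1) f ↔ ∀ c, IsPolyDeg s (aDeriv c f) := by
  refine ⟨fun hf c h x => ?_, fun hf h x => ?_⟩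
  · simpa [iterADeriv_succ'] using hf (Fin.cons c h) x
  · rw [iterADeriv_succ']
    exact hf _ _ _

theorem isPolyDeg_zero_fun (s : ℕ) : IsPolyDeg s (0 : G → M) := fun h x => by
  rw [iterADeriv_zero_fun, Pi.zero_apply]

theorem isPolyDeg_const (s : ℕ) (a : M) : IsPolyDeg s (fun _ : G => a) :=
  (isPolyDeg_iff_of_aDeriv_eq (fun _ => by funext; simp [aDeriv]) s).2 (isPolyDeg_zero_fun s)

theorem IsPolyDeg.add {s : ℕ} {f g : G → M} (hf : IsPolyDeg s f) (hg : IsPolyDeg s g) :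
    IsPolyDeg s (f + g) := fun h x => by
  rw [iterADeriv_add, Pi.add_apply, hf, hg, add_zero]

theorem isPolyDeg_sum {s : ℕ} {κ : Type*} (T : Finset κ) {f : κ → G → M}
    (hf : ∀ i ∈ T, IsPolyDeg s (f i)) : IsPolyDeg s (fun x => ∑ i ∈ T, f i x) := by
  simp_rw [← Finset.sum_apply]
  exact Finset.sum_induction f (IsPolyDeg s) (fun _ _ => IsPolyDeg.add) (isPolyDeg_zero_fun s) hf

theorem IsPolyDeg.comp_addMonoidHom {M' : Type*} [AddCommGroup M'] {s : ℕ} {f : G → M}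
    (φ : M →+ M') (hf : IsPolyDeg s f) : IsPolyDeg s (φ ∘ f) := fun h x => by
  rw [iterADeriv_comp_addMonoidHom, Function.comp_apply, hf, map_zero]

theorem isPolyDeg_comp_iff {M' : Type*} [AddCommGroup M'] {s : ℕ} {f : G → M}
    (φ : M →+ M') (hφ : Function.Injective φ) : IsPolyDeg s (φ ∘ f) ↔ IsPolyDeg s f := by
  refine ⟨fun hf h x => hφ ?_, IsPolyDeg.comp_addMonoidHom φ⟩
  rw [map_zero, ← Function.comp_apply (f := φ), ← iterADeriv_comp_addMonoidHom]
  exact hf h x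

end IterADeriv

section Monomial

variable {ι R : Type*} [CommRing R]

theorem aDeriv_prod_eq_sum [DecidableEq ι] (T : Finset ι) (c x : ι → R) :
    aDeriv c (fun y : ι → R => ∏ i ∈ T, y i) x
      = ∑ U ∈ T.powerset.erase T, (∏ i ∈ U, x i) * ∏ i ∈ T \ U, c i := by
  simp only [aDeriv, Pi.add_apply, prod_add, ← sum_erase_add _ _ (mem_powerset_self T),
    sdiff_self, bot_eq_empty, prod_empty, mul_one, add_sub_cancel_right]

theorem isPolyDeg_prod : ∀ (s : ℕ) (T : Finset ι), T.card ≤ s →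
    IsPolyDeg s (fun x : ι → R => ∏ i ∈ T, x i)
  | 0, T, hT => by
    rw [card_eq_zero.1 (Nat.le_zero.1 hT)]
    simpa using isPolyDeg_const 0 (1 : R)
  | s + 1, T, hT => by
    classical
    refine isPolyDeg_succ_iff.2 fun c => ?_
    rw [show aDeriv c _ = _ from funext (aDeriv_prod_eq_sum T c)]
    refine isPolyDeg_sum _ fun U hU => ?_
    have hUT : U ⊂ T := Finset.ssubset_iff_subset_ne.2
      ⟨mem_powerset.1 (mem_of_mem_erase hU), ne_of_mem_erase hU⟩
    have hU : U.card ≤ s := by have := card_lt_card hUT; omega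
    exact (isPolyDeg_prod s U hU).comp_addMonoidHom (AddMonoidHom.mulRight _)

theorem aDeriv_single_prod [DecidableEq ι] {T : Finset ι} {j : ι} (hj : j ∈ T) :
    aDeriv (Pi.single j 1) (fun x : ι → R => ∏ i ∈ T, x i) = fun x => ∏ i ∈ T.erase j, x i := by
  funext x
  have hx : ∀ i ∈ T.erase j, (x + Pi.single j 1 : ι → R) i = x i := fun i hi => by
    simp [ne_of_mem_erase hi]
  simp only [aDeriv]
  rw [← mul_prod_erase T _ hj, ← mul_prod_erase T _ hj, prod_congr rfl hx]
  simp only [Pi.add_apply, Pi.single_eq_same]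
  ring

theorem not_isPolyDeg_prod [Nontrivial R] : ∀ (s : ℕ) (T : Finset ι), s < T.card →
    ¬ IsPolyDeg s (fun x : ι → R => ∏ i ∈ T, x i)
  | 0, T, hT, hP => by
    classical
    obtain ⟨j, hj⟩ := card_pos.1 hT
    have := hP (fun _ => Pi.single j 1) 1
    rw [iterADeriv_succ', aDeriv_single_prod hj, iterADeriv_zero] at this
    simp at this
  | s + 1, T, hT, hP => by
    classical
    obtain ⟨j, hj⟩ := card_pos.1 (by omega : 0 < T.card)
    refine not_isPolyDeg_prod s (T.erase j) (by rw [card_erase_of_mem hj]; omega) ?_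
    rw [← aDeriv_single_prod hj]
    exact isPolyDeg_succ_iff.1 hP _

theorem exactDeg_prod [Nontrivial R] (T : Finset ι) :
    ExactDeg T.card (fun x : ι → R => ∏ i ∈ T, x i) :=
  ⟨isPolyDeg_prod _ T le_rfl, fun s hs => not_isPolyDeg_prod s T hs⟩

end Monomial

theorem exists_exactDeg_exactDepth (p : ℕ) [Fact p.Prime] (d k : ℕ) :
    ∃ (n : ℕ) (P : (Fin n → ZMod p) → 𝕋) (x : Fin n → ZMod p),
      ExactDeg d P ∧ ExactDepth p k P ∧ addOrderOf (P x) = p ^ (k + 1) := by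
  set c : 𝕋 := ZMod.toAddCircle (1 : ZMod (p ^ (k + 1)))
  have hc : addOrderOf c = p ^ (k + 1) := by
    rw [addOrderOf_injective _ (ZMod.toAddCircle_injective _), ZMod.addOrderOf_one]
  -- the `- 1` makes `P 1 = c`
  set P : (Fin d → ZMod p) → 𝕋 := fun x => c + ZMod.toAddCircle (∏ i, x i - 1)
  have hP1 : P 1 = c := by simp [P]
  refine ⟨d, P, 1, ?_, ⟨fun x => ?_, fun h => ?_⟩, hP1 ▸ hc⟩
  · have hdeg (s : ℕ) : IsPolyDeg s P ↔ IsPolyDeg s (fun x : Fin d → ZMod p => ∏ i, x i) := by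
      rw [← isPolyDeg_comp_iff _ (ZMod.toAddCircle_injective p)]
      refine isPolyDeg_iff_of_aDeriv_eq (fun h => funext fun x => ?_) s
      simp only [aDeriv, P, Function.comp_apply, map_sub]
      abel
    simpa [ExactDeg, hdeg] using exactDeg_prod (R := ZMod p) (univ : Finset (Fin d))
  · have hp : p ^ (k + 1) • (∏ i, x i - 1) = 0 := by
      rw [nsmul_eq_mul, Nat.cast_pow, ZMod.natCast_self, zero_pow (Nat.succ_ne_zero k), zero_mul]
    have hc0 : p ^ (k + 1) • c = 0 := hc ▸ addOrderOf_nsmul_eq_zero c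
    rw [smul_add, hc0, ← map_nsmul, hp, map_zero, add_zero]
  · have hdvd : p ^ (k + 1) ∣ p ^ k := hc ▸ addOrderOf_dvd_of_nsmul_eq_zero (hP1 ▸ h 1)
    exact absurd ((Nat.pow_dvd_pow_iff_le_right (Fact.out : p.Prime).one_lt).1 hdvd) (by omega)

section ZModCoefficients

variable {N : ℕ} [NeZero N] {M : Type*} [AddCommGroup M]

def valNSMulHom (v : M) (hv : N • v = 0) : ZMod N →+ M where
  toFun a := a.val • v
  map_zero' := by simp
  map_add' a b := by rw [ZMod.val_add, ← nsmul_eq_mod_nsmul _ hv, add_nsmul]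

@[simp]
theorem valNSMulHom_apply (v : M) (hv : N • v = 0) (a : ZMod N) :
    valNSMulHom v hv a = a.val • v := rfl

theorem eq_zero_of_val_nsmul_eq_zero {v : M} (hv : addOrderOf v = N) {a : ZMod N}
    (h : a.val • v = 0) : a = 0 := by
  subst hv
  rw [← ZMod.natCast_zmod_val a, ZMod.natCast_eq_zero_iff]
  exact addOrderOf_dvd_of_nsmul_eq_zero h

theorem sum_val_nsmul_sub_single {μ : Type*} [Fintype μ] [DecidableEq μ] {w : μ → M}
    (hw : ∀ j, N • w j = 0) (c : μ → ZMod N) (j₀ : μ) (t : ZMod N) :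
    ∑ j, (c j - (Pi.single j₀ t : μ → ZMod N) j).val • w j
      = ∑ j, (c j).val • w j - t.val • w j₀ := by
  simp only [← valNSMulHom_apply _ (hw _), map_sub, sum_sub_distrib]
  congr 1
  rw [Fintype.sum_eq_single j₀ fun j hj => by rw [Pi.single_eq_of_ne hj, map_zero],
    Pi.single_eq_same]

end ZModCoefficients

section Forms

variable {p n : ℕ} {ι μ : Type*} [Fintype ι] [DecidableEq ι]

theorem formApply_single (w : ι → ZMod p) (t₀ : ι) (a : Fin n → ZMod p) :
    formApply w (Pi.single t₀ a) = w t₀ • a := by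
  simp [formApply, Pi.single_apply]

theorem formApply_of_eq_ite {w : ι → ZMod p} {t₀ : ι}
    (hw : ∀ t, w t = if t = t₀ then 1 else 0) (x : ι → Fin n → ZMod p) :
    formApply w x = x t₀ := by
  simp [formApply, hw]

/-- The forms `L_j(x)` and `L_j(x_{t₀}, y)` on two copies `x`, `y` of the variables; the
coordinate `y_{t₀}` is a dummy variable. -/
def doubleForms {p : ℕ} {ι μ : Type*} [DecidableEq ι] (t₀ : ι) (L : μ → ι → ZMod p) :
    μ ⊕ μ → ι ⊕ ι → ZMod p :=
  Sum.elim (fun j => Sum.elim (L j) fun _ => 0)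
    (fun j => Sum.elim (fun t => if t = t₀ then 1 else 0) fun t => if t = t₀ then 0 else L j t)

variable {L : μ → ι → ZMod p} {t₀ : ι}

theorem formApply_doubleForms_inl (j : μ) (x : ι ⊕ ι → Fin n → ZMod p) :
    formApply (doubleForms t₀ L (.inl j)) x = formApply (L j) (x ∘ Sum.inl) := by
  simp [formApply, doubleForms, Fintype.sum_sum_type]

theorem formApply_doubleForms_inr {j : μ} (hj : L j t₀ = 1) (x : ι ⊕ ι → Fin n → ZMod p) :
    formApply (doubleForms t₀ L (.inr j)) x
      = formApply (L j) (Function.update (x ∘ Sum.inr) t₀ (x (.inl t₀))) := by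
  simp only [formApply, doubleForms, Fintype.sum_sum_type, Sum.elim_inl, Sum.elim_inr,
    Function.update_apply, Function.comp_apply, ite_smul, one_smul, zero_smul, sum_ite_eq',
    mem_univ, if_true]
  rw [← add_sum_erase _ _ (mem_univ t₀), ← add_sum_erase _ _ (mem_univ t₀)]
  simp only [if_true, hj, one_smul, zero_add]
  congr 1
  exact sum_congr rfl fun t ht => by simp [ne_of_mem_erase ht]

end Forms

def DepSetZMod (p k d : ℕ) {ι μ : Type*} [Fintype ι] [Fintype μ] (L : μ → ι → ZMod p) :
    Set (μ → ZMod (p ^ (k + 1))) :=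
  (fun c j => (c j).val) ⁻¹' DepSet p k d L

section DepSetZMod

variable {p k d n : ℕ} [NeZero p] {ι μ : Type*} [Fintype ι] [Fintype μ]

theorem mem_depSetZMod {L : μ → ι → ZMod p} {c : μ → ZMod (p ^ (k + 1))} :
    c ∈ DepSetZMod p k d L ↔ ∀ (n : ℕ) (P : (Fin n → ZMod p) → 𝕋), ExactDeg d P →
      ExactDepth p k P → ∀ x : ι → Fin n → ZMod p, ∑ j, (c j).val • P (formApply (L j) x) = 0 :=
  and_iff_right fun j => ZMod.val_lt (c j)

theorem ncard_depSet (L : μ → ι → ZMod p) :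
    (DepSet p k d L).ncard = (DepSetZMod p k d L).ncard := by
  have hrange : DepSet p k d L ⊆ Set.range fun (c : μ → ZMod (p ^ (k + 1))) j => (c j).val :=
    fun lam hlam => ⟨fun j => lam j, funext fun j => ZMod.val_cast_of_lt (hlam.1 j)⟩
  have hinj : Function.Injective fun (c : μ → ZMod (p ^ (k + 1))) j => (c j).val :=
    fun c c' h => funext fun j => ZMod.val_injective _ (congrFun h j)
  conv_lhs => rw [← Set.image_preimage_eq_of_subset hrange]
  exact Set.ncard_image_of_injective _ hinj

theorem sum_val_nsmul_formApply_single [DecidableEq ι] {L : μ → ι → ZMod p} {t₀ : ι}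
    (hL : ∀ j, L j t₀ = 1) {P : (Fin n → ZMod p) → 𝕋} (hP : ExactDepth p k P)
    (c : μ → ZMod (p ^ (k + 1))) (a : Fin n → ZMod p) :
    ∑ j, (c j).val • P (formApply (L j) (Pi.single t₀ a)) = (∑ j, c j).val • P a := by
  simp only [formApply_single, hL, one_smul, ← valNSMulHom_apply _ (hP.1 a), map_sum]

theorem sub_single_sum_mem_depSetZMod_iff [DecidableEq ι] [DecidableEq μ]
    {L : μ → ι → ZMod p} {j₀ : μ} {t₀ : ι} (hL₀ : ∀ t, L j₀ t = if t = t₀ then 1 else 0)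
    (a : μ → ZMod (p ^ (k + 1))) :
    a - Pi.single j₀ (∑ j, a j) ∈ DepSetZMod p k d L ↔
      ∀ (n : ℕ) (P : (Fin n → ZMod p) → 𝕋), ExactDeg d P → ExactDepth p k P →
        ∀ x : ι → Fin n → ZMod p,
          ∑ j, (a j).val • P (formApply (L j) x) = (∑ j, a j).val • P (x t₀) := by
  rw [mem_depSetZMod]
  refine forall₄_congr fun n P _ hP => forall_congr' fun x => ?_
  simp only [Pi.sub_apply, sum_val_nsmul_sub_single (fun j => hP.1 _), formApply_of_eq_ite hL₀,
    sub_eq_zero]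

end DepSetZMod

section Doubling

variable {p k d : ℕ} [Fact p.Prime] {ι μ : Type*} [Fintype ι] [Fintype μ] [DecidableEq ι]
  {L : μ → ι → ZMod p} {t₀ : ι}

theorem sum_eq_zero_of_mem_depSetZMod (hL : ∀ j, L j t₀ = 1) {c : μ → ZMod (p ^ (k + 1))} (hc : c ∈ DepSetZMod p k d L) :
    ∑ j, c j = 0 := by
  obtain ⟨n, P, a, hdeg, hdep, ha⟩ := exists_exactDeg_exactDepth p d k
  refine eq_zero_of_val_nsmul_eq_zero ha ?_
  rw [← sum_val_nsmul_formApply_single hL hdep]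
  exact mem_depSetZMod.1 hc n P hdeg hdep _

theorem sum_inl_add_sum_inr_eq_zero (haff : ∀ j, L j t₀ = 1)
    {c : μ ⊕ μ → ZMod (p ^ (k + 1))} (hc : c ∈ DepSetZMod p k d (doubleForms t₀ L)) :
    ∑ j, c (.inl j) + ∑ j, c (.inr j) = 0 := by
  rw [← Fintype.sum_sum_type]
  exact sum_eq_zero_of_mem_depSetZMod (t₀ := .inl t₀)
    (by rintro (j | j) <;> simp [doubleForms, haff]) hc

variable [DecidableEq μ] {j₀ : μ}

theorem sum_elim_mem_depSetZMod_doubleForms_iff (haff : ∀ j, L j t₀ = 1)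
    (hL₀ : ∀ t, L j₀ t = if t = t₀ then 1 else 0) {a b : μ → ZMod (p ^ (k + 1))} :
    Sum.elim a b ∈ DepSetZMod p k d (doubleForms t₀ L) ↔
      ∑ j, a j + ∑ j, b j = 0 ∧ a - Pi.single j₀ (∑ j, a j) ∈ DepSetZMod p k d L ∧
        b - Pi.single j₀ (∑ j, b j) ∈ DepSetZMod p k d L := by
  have hsplit (n : ℕ) (P : (Fin n → ZMod p) → 𝕋) (x : ι ⊕ ι → Fin n → ZMod p) :
      ∑ j, (Sum.elim a b j).val • P (formApply (doubleForms t₀ L j) x)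
        = ∑ j, (a j).val • P (formApply (L j) (x ∘ Sum.inl))
          + ∑ j, (b j).val •
              P (formApply (L j) (Function.update (x ∘ Sum.inr) t₀ (x (.inl t₀)))) := by
    simp only [Fintype.sum_sum_type, Sum.elim_inl, Sum.elim_inr, formApply_doubleForms_inl,
      formApply_doubleForms_inr (haff _)]
  have hsum_smul (hsum : ∑ j, a j + ∑ j, b j = 0) {n : ℕ} {P : (Fin n → ZMod p) → 𝕋}
      (hP : ExactDepth p k P) (v : Fin n → ZMod p) :
      (∑ j, a j).val • P v + (∑ j, b j).val • P v = 0 := by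
    rw [← valNSMulHom_apply _ (hP.1 v), ← valNSMulHom_apply _ (hP.1 v), ← map_add, hsum, map_zero]
  rw [sub_single_sum_mem_depSetZMod_iff hL₀, sub_single_sum_mem_depSetZMod_iff hL₀]
  constructor
  · intro h
    have hsum := sum_inl_add_sum_inr_eq_zero haff h
    simp only [mem_depSetZMod, hsplit] at h
    refine ⟨hsum, fun n P hdeg hP x => ?_, fun n P hdeg hP y => ?_⟩
    · have hx := h n P hdeg hP (Sum.elim x 0)
      rw [Sum.elim_comp_inl, Sum.elim_comp_inr, Sum.elim_inl,
        show Function.update (0 : ι → Fin n → ZMod p) t₀ (x t₀) = Pi.single t₀ (x t₀) from rfl,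
        sum_val_nsmul_formApply_single haff hP] at hx
      exact add_right_cancel (hx.trans (hsum_smul hsum hP _).symm)
    · have hy := h n P hdeg hP (Sum.elim (Pi.single t₀ (y t₀)) y)
      rw [Sum.elim_comp_inl, Sum.elim_comp_inr, Sum.elim_inl, Pi.single_eq_same,
        Function.update_eq_self, sum_val_nsmul_formApply_single haff hP] at hy
      exact add_left_cancel (hy.trans (hsum_smul hsum hP _).symm)
  · rintro ⟨hsum, ha, hb⟩
    refine mem_depSetZMod.2 fun n P hdeg hP x => ?_
    rw [hsplit, ha n P hdeg hP, hb n P hdeg hP, Function.update_self]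
    exact hsum_smul hsum hP _

def doubleFormsEquiv (haff : ∀ j, L j t₀ = 1) (hL₀ : ∀ t, L j₀ t = if t = t₀ then 1 else 0) :
    DepSetZMod p k d (doubleForms t₀ L) ≃
      (DepSetZMod p k d L × DepSetZMod p k d L) × ZMod (p ^ (k + 1)) where
  toFun c :=
    have hc := (sum_elim_mem_depSetZMod_doubleForms_iff haff hL₀).1
      ((Sum.elim_comp_inl_inr c.1).symm ▸ c.2)
    ((⟨c.1 ∘ Sum.inl - Pi.single j₀ (∑ j, c.1 (.inl j)), hc.2.1⟩,
      ⟨c.1 ∘ Sum.inr - Pi.single j₀ (∑ j, c.1 (.inr j)), hc.2.2⟩), ∑ j, c.1 (.inl j))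
  invFun q := ⟨Sum.elim (q.1.1.1 + Pi.single j₀ q.2) (q.1.2.1 - Pi.single j₀ q.2), by
    obtain ⟨⟨⟨a, ha⟩, ⟨b, hb⟩⟩, t⟩ := q
    refine (sum_elim_mem_depSetZMod_doubleForms_iff haff hL₀).2 ?_
    simp only [Pi.add_apply, Pi.sub_apply, sum_add_distrib, sum_sub_distrib, sum_pi_single',
      mem_univ, if_true, sum_eq_zero_of_mem_depSetZMod haff ha,
      sum_eq_zero_of_mem_depSetZMod haff hb, zero_add, zero_sub, add_neg_cancel,
      add_sub_cancel_right, Pi.single_neg, sub_neg_eq_add, sub_add_cancel, true_and]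
    exact ⟨ha, hb⟩⟩
  left_inv c := by
    have hsum := sum_inl_add_sum_inr_eq_zero haff c.2
    ext (j | j)
    · simp
    · simp only [Function.comp_apply, Sum.elim_inr, Pi.sub_apply]
      rw [sub_sub, ← Pi.add_apply, ← Pi.single_add, (add_comm _ _).trans hsum, Pi.single_zero,
        Pi.zero_apply, sub_zero]
  right_inv q := by
    obtain ⟨⟨⟨a, ha⟩, ⟨b, hb⟩⟩, t⟩ := q
    simp [sum_add_distrib, sum_sub_distrib, sum_eq_zero_of_mem_depSetZMod haff ha,
      sum_eq_zero_of_mem_depSetZMod haff hb, Pi.single_neg]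

theorem ncard_depSetZMod_doubleForms (haff : ∀ j, L j t₀ = 1)
    (hL₀ : ∀ t, L j₀ t = if t = t₀ then 1 else 0) :
    (DepSetZMod p k d (doubleForms t₀ L)).ncard
      = (DepSetZMod p k d L).ncard ^ 2 * p ^ (k + 1) := by
  rw [← Nat.card_coe_set_eq, Nat.card_congr (doubleFormsEquiv haff hL₀), Nat.card_prod,
    Nat.card_prod, Nat.card_zmod, Nat.card_coe_set_eq, sq]

end Doubling

theorem dependency_set_doubling_general (p : ℕ) [Fact p.Prime] (ℓ m d k : ℕ)
    (L : Fin (m + 1) → Fin (ℓ + 1) → ZMod p)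
    (haff : ∀ j, L j 0 = 1)
    (hL0 : ∀ t, L 0 t = if t = 0 then 1 else 0) :
    Set.ncard (DepSet p k d
        (Sum.elim
          (fun j : Fin (m + 1) => Sum.elim (L j) (fun _ : Fin (ℓ + 1) => (0 : ZMod p)))
          (fun j : Fin (m + 1) => Sum.elim
            (fun t : Fin (ℓ + 1) => if t = 0 then (1 : ZMod p) else 0)
            (fun t : Fin (ℓ + 1) => if t = 0 then (0 : ZMod p) else L j t))))
      = (Set.ncard (DepSet p k d L)) ^ 2 * p ^ (k + 1) := by
  rw [ncard_depSet, ncard_depSet]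
  exact ncard_depSetZMod_doubleForms haff hL0

/-- Doubling of dependency sets: if `A = (L_1,…,L_m)` is a system of affine
forms with `L_1(x) = x_1`, and `A'` is the doubled system
`{L_j(x_1,x_2,…,x_ℓ)} ∪ {L_j(x_1,y_2,…,y_ℓ)}`, then `|Λ'| = |Λ|² · p^{k+1}`. -/
theorem dependency_set_doubling (p : ℕ) [Fact p.Prime] (ℓ m d k : ℕ)
    (hdk : k * (p - 1) < d)
    (L : Fin (m + 1) → Fin (ℓ + 1) → ZMod p)
    (haff : ∀ j, L j 0 = 1)
    (hL0 : ∀ t, L 0 t = if t = 0 then 1 else 0) :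
    Set.ncard (DepSet p k d
        (Sum.elim
          (fun j : Fin (m + 1) => Sum.elim (L j) (fun _ : Fin (ℓ + 1) => (0 : ZMod p)))
          (fun j : Fin (m + 1) => Sum.elim
            (fun t : Fin (ℓ + 1) => if t = 0 then (1 : ZMod p) else 0)
            (fun t : Fin (ℓ + 1) => if t = 0 then (0 : ZMod p) else L j t))))
      = (Set.ncard (DepSet p k d L)) ^ 2 * p ^ (k + 1) :=
  dependency_set_doubling_general p ℓ m d k L haff hL0

end
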